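/- Let (H,E) be a normal simplicial semigroup satisfying the CM condition, and let {a_1,…,a_s} be the (finite) set of minimal generators of ω_H, i.e., those a ∈ ω_H with a − h ∉ ω_H for every nonzero h ∈ H. Then (H,E) has an AG witness (equivalently, H is an AG semigroup) if and only if there exists 1 ≤ i ≤ s such that for every j ≠ i, 1 ≤ j ≤ s, there exist 1 ≤ j' ≤ s and b ∈ E satisfying a_j + a_{j'} = a_i + Σ_{h ∈ E\{b}} h; in that case a_i is an Ulrich element of H. In particular, when the rank of H is 2 the condition reads: a_j + a_{j'} = a_i + b for some j' and some b ∈ E. -/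

import Mathlib

open scoped Classical

namespace AGpaper

/-- `(H, E)` is a simplicial semigroup of rank `d` with extreme rays `b : Fin d → ℤ^N`. -/
def IsSimplicial (N d : ℕ) (H : AddSubmonoid (Fin N → ℤ)) (b : Fin d → (Fin N → ℤ)) : Prop :=
  H.FG ∧ (∀ i, b i ∈ H) ∧
  LinearIndependent ℚ (fun i : Fin d => (fun j : Fin N => ((b i j : ℚ)))) ∧
  (∃ n : ℕ, 0 < n ∧ ∀ x ∈ H, ∃ c : Fin d → ℕ, (n : ℤ) • x = ∑ i, (c i : ℤ) • b i)

/-- The Apéry set w.r.t. a general family of extreme rays. -/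
def aperyG {N d : ℕ} (H : AddSubmonoid (Fin N → ℤ)) (b : Fin d → (Fin N → ℤ)) :
    Set (Fin N → ℤ) :=
  {x | x ∈ H ∧ ∀ i : Fin d, x - b i ∉ H}

/-- The socle w.r.t. a general family of extreme rays. -/
def socG {N d : ℕ} (H : AddSubmonoid (Fin N → ℤ)) (b : Fin d → (Fin N → ℤ)) :
    Set (Fin N → ℤ) :=
  {x | x ∈ aperyG H b ∧ ∀ y ∈ aperyG H b, y - x ∈ H → x = y}

/-- The CM condition w.r.t. a general family of extreme rays. -/
def CMG {N d : ℕ} (H : AddSubmonoid (Fin N → ℤ)) (b : Fin d → (Fin N → ℤ)) : Prop :=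
  ∀ g ∈ AddSubgroup.closure (H : Set (Fin N → ℤ)),
    ∃! a, a ∈ aperyG H b ∧ ∃ c : Fin d → ℤ, g - a = ∑ i, c i • b i

/-- Normality of a submonoid of `ℤ^N`. -/
def IsNormalSg (N : ℕ) (H : AddSubmonoid (Fin N → ℤ)) : Prop :=
  ∀ g ∈ AddSubgroup.closure (H : Set (Fin N → ℤ)),
    (∃ n : ℕ, 1 ≤ n ∧ n • g ∈ H) → g ∈ H

/-- `ω_H = {-w + Σ_{b ∈ E} b + h : w ∈ Soc(H,E), h ∈ H}`. -/
def omegaG {N d : ℕ} (H : AddSubmonoid (Fin N → ℤ)) (b : Fin d → (Fin N → ℤ)) :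
    Set (Fin N → ℤ) :=
  {x | ∃ w ∈ socG H b, ∃ h ∈ H, x = -w + (∑ i, b i) + h}

/-- `x` is a minimal generator of `ω_H`: `x ∈ ω_H` and `x - h ∉ ω_H` for every
nonzero `h ∈ H`. -/
def minGenG {N d : ℕ} (H : AddSubmonoid (Fin N → ℤ)) (b : Fin d → (Fin N → ℤ))
    (x : Fin N → ℤ) : Prop :=
  x ∈ omegaG H b ∧ ∀ h ∈ H, h ≠ 0 → x - h ∉ omegaG H b

/-- An AG witness w.r.t. a general family of extreme rays. -/
def AGwitnessG {N d : ℕ} (H : AddSubmonoid (Fin N → ℤ)) (b : Fin d → (Fin N → ℤ))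
    (w : Fin N → ℤ) : Prop :=
  w ∈ socG H b ∧
  (∀ h ∈ aperyG H b, ((h ∈ socG H b ∧ h ≠ w) ↔ w - h ∉ H)) ∧
  (∀ h ∈ socG H b, h ≠ w → ∃ i : Fin d, ∃ h' ∈ socG H b, h + h' = w + b i)

/-!
For normal simplicial `H`, the coordinates `κ` with respect to the extreme rays identify `H` with
the points of `G(H)` with nonnegative coordinates, `≤_H` with the coordinatewise order, and
`Ap(H,E)` with the points of `H` whose coordinates lie in `[0,1)`. The minimal generators of `ω_H`
are the elements `Σ E - w` with `w ∈ Soc(H,E)`, and under this correspondence the index condition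
is condition (ii) for `w`. Condition (ii) forces condition (i): if `h ∈ Ap(H,E)` is not below `w`,
choose `i` with `κᵢ w < κᵢ h`. Applying (ii) to a socle element above `h` shows that
`t = w + bᵢ - h` lies in `Ap(H,E)`; applying (ii) to a socle element `g` above `t` gives a socle
element `g'` with `g + g' = w + bᵢ`, hence `g' ≤_H h`, and maximality of `g'` gives `h = g'`.
-/

open Finset

theorem exists_rayCoord {N d : ℕ} {b : Fin d → Fin N → ℤ}
    (hli : LinearIndependent ℚ (fun i : Fin d => (fun j : Fin N => ((b i j : ℚ))))) :
    ∃ κ : (Fin N → ℤ) →+ (Fin d → ℚ), ∀ k, κ (b k) = Pi.single k 1 := by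
  obtain ⟨g, hg⟩ := LinearMap.exists_extend
    ((Finsupp.linearEquivFunOnFinite ℚ ℚ (Fin d)).toLinearMap ∘ₗ hli.repr)
  refine ⟨g.toAddMonoidHom.comp ((Int.castAddHom ℚ).compLeft (Fin N)), fun k => ?_⟩
  have hk := LinearMap.congr_fun hg ⟨_, Submodule.subset_span (Set.mem_range_self k)⟩
  rw [LinearMap.comp_apply, LinearMap.comp_apply, hli.repr_eq_single k _ rfl] at hk
  exact hk.trans (by simp)

section Coordinates

variable {N d : ℕ} {H : AddSubmonoid (Fin N → ℤ)} {b : Fin d → Fin N → ℤ}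
  {κ : (Fin N → ℤ) →+ (Fin d → ℚ)}

theorem natCast_mul_coord (hκ : ∀ k, κ (b k) = Pi.single k 1) {n : ℕ} {x : Fin N → ℤ}
    {c : Fin d → ℕ} (hc : (n : ℤ) • x = ∑ i, (c i : ℤ) • b i) (i : Fin d) :
    (n : ℚ) * κ x i = c i := by
  have h := congrFun (congrArg κ hc) i
  simp only [map_zsmul, map_sum, hκ] at h
  simpa [Pi.single_apply] using h

theorem coord_nonneg (hH : IsSimplicial N d H b) (hκ : ∀ k, κ (b k) = Pi.single k 1)
    {x : Fin N → ℤ} (hx : x ∈ H) (i : Fin d) : 0 ≤ κ x i := by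
  obtain ⟨-, -, -, n, hn, hnx⟩ := hH
  obtain ⟨c, hc⟩ := hnx x hx
  have hci := natCast_mul_coord hκ hc i
  exact nonneg_of_mul_nonneg_right (hci ▸ Nat.cast_nonneg _) (Nat.cast_pos.2 hn)

theorem eq_zero_of_coord_eq_zero (hH : IsSimplicial N d H b)
    (hκ : ∀ k, κ (b k) = Pi.single k 1) {x : Fin N → ℤ} (hx : x ∈ H) (h0 : κ x = 0) :
    x = 0 := by
  obtain ⟨-, -, -, n, hn, hnx⟩ := hH
  obtain ⟨c, hc⟩ := hnx x hx
  have hc0 : ∀ i, c i = 0 := fun i => by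
    simpa [h0, eq_comm] using natCast_mul_coord hκ hc i
  have hnx0 : (n : ℤ) • x = 0 := by simp [hc, hc0]
  exact (smul_eq_zero.1 hnx0).resolve_left (by exact_mod_cast hn.ne')

theorem eq_zero_of_mem_of_add_eq_zero (hH : IsSimplicial N d H b)
    (hκ : ∀ k, κ (b k) = Pi.single k 1) {x y : Fin N → ℤ} (hx : x ∈ H) (hy : y ∈ H)
    (hxy : x + y = 0) : x = 0 := by
  refine eq_zero_of_coord_eq_zero hH hκ hx ?_
  have hsum : κ x + κ y = 0 := by rw [← map_add, hxy, map_zero]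
  exact ((add_eq_zero_iff_of_nonneg (coord_nonneg hH hκ hx) (coord_nonneg hH hκ hy)).1 hsum).1

theorem sub_mem_iff_coord_le (hH : IsSimplicial N d H b) (hκ : ∀ k, κ (b k) = Pi.single k 1)
    (hnorm : IsNormalSg N H) {x y : Fin N → ℤ} (hx : x ∈ H) (hy : y ∈ H) :
    x - y ∈ H ↔ κ y ≤ κ x := by
  refine ⟨fun h i => by simpa using coord_nonneg hH hκ h i, fun hle => ?_⟩
  obtain ⟨-, hbH, -, n, hn, hnx⟩ := hH
  obtain ⟨cx, hcx⟩ := hnx x hx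
  obtain ⟨cy, hcy⟩ := hnx y hy
  have hc : ∀ i, cy i ≤ cx i := fun i => by
    have := mul_le_mul_of_nonneg_left (hle i) (Nat.cast_nonneg (α := ℚ) n)
    rwa [natCast_mul_coord hκ hcx, natCast_mul_coord hκ hcy, Nat.cast_le] at this
  have key : n • (x - y) = ∑ i, (cx i - cy i) • b i := by
    rw [← natCast_zsmul, smul_sub, hcx, hcy, ← sum_sub_distrib]
    refine sum_congr rfl fun i _ => ?_
    rw [← sub_smul, ← Nat.cast_sub (hc i), natCast_zsmul]
  refine hnorm _ (sub_mem (AddSubgroup.subset_closure hx) (AddSubgroup.subset_closure hy))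
    ⟨n, hn, ?_⟩
  rw [key]
  exact sum_mem fun i _ => nsmul_mem (hbH i) _

theorem mem_aperyG_iff (hH : IsSimplicial N d H b) (hκ : ∀ k, κ (b k) = Pi.single k 1)
    (hnorm : IsNormalSg N H) {x : Fin N → ℤ} (hx : x ∈ H) :
    x ∈ aperyG H b ↔ ∀ i, κ x i < 1 := by
  simp only [aperyG, Set.mem_ofPred_eq, hx, true_and,
    sub_mem_iff_coord_le hH hκ hnorm hx (hH.2.1 _), hκ]
  refine forall_congr' fun i => ⟨fun h => lt_of_not_ge fun hi => h fun j => ?_,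
    fun hi h => (h i).not_gt (by simpa using hi)⟩
  rcases eq_or_ne j i with rfl | hj
  · simpa using hi
  · simpa [hj] using coord_nonneg hH hκ hx j

theorem aperyG_finite (hH : IsSimplicial N d H b) (hκ : ∀ k, κ (b k) = Pi.single k 1)
    (hnorm : IsNormalSg N H) : (aperyG H b).Finite := by
  obtain ⟨n, hn, hnx⟩ := hH.2.2.2
  have hinj : Function.Injective fun x : Fin N → ℤ => (n : ℤ) • x :=
    smul_right_injective _ (by exact_mod_cast hn.ne')
  refine ((Set.finite_range fun c : Fin d → Fin n => ∑ i, ((c i : ℕ) : ℤ) • b i).preimage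
    hinj.injOn).subset fun x hx => ?_
  obtain ⟨c, hc⟩ := hnx x hx.1
  have hlt := (mem_aperyG_iff hH hκ hnorm hx.1).1 hx
  refine ⟨fun i => ⟨c i, ?_⟩, hc.symm⟩
  have : (c i : ℚ) < n := by
    rw [← natCast_mul_coord hκ hc i]
    exact mul_lt_of_lt_one_right (Nat.cast_pos.2 hn) (hlt i)
  exact_mod_cast this

theorem exists_socG_sub_mem (hH : IsSimplicial N d H b) (hκ : ∀ k, κ (b k) = Pi.single k 1)
    (hnorm : IsNormalSg N H) {x : Fin N → ℤ} (hx : x ∈ aperyG H b) :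
    ∃ g ∈ socG H b, g - x ∈ H := by
  obtain ⟨g, ⟨hg, hgx⟩, hmax⟩ := ((aperyG_finite hH hκ hnorm).inter_of_left
    {y | y - x ∈ H}).exists_maximalFor κ _ ⟨x, hx, by simp⟩
  refine ⟨g, ⟨hg, fun y hy hyg => ?_⟩, hgx⟩
  have hle := (sub_mem_iff_coord_le hH hκ hnorm hy.1 hg.1).1 hyg
  have hyx : y - x ∈ H := by simpa using add_mem hyg hgx
  have hκyg : κ (y - g) = 0 := by rw [map_sub, le_antisymm (hmax ⟨hy, hyx⟩ hle) hle, sub_self]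
  exact (sub_eq_zero.1 (eq_zero_of_coord_eq_zero hH hκ hyg hκyg)).symm

end Coordinates

def HasSocleComplements {N d : ℕ} (H : AddSubmonoid (Fin N → ℤ)) (b : Fin d → Fin N → ℤ)
    (w : Fin N → ℤ) : Prop :=
  ∀ h ∈ socG H b, h ≠ w → ∃ i : Fin d, ∃ h' ∈ socG H b, h + h' = w + b i

section Witness

variable {N d : ℕ} {H : AddSubmonoid (Fin N → ℤ)} {b : Fin d → Fin N → ℤ}
  {κ : (Fin N → ℤ) →+ (Fin d → ℚ)} {w : Fin N → ℤ}

theorem exists_complement_of_coord_lt (hH : IsSimplicial N d H b)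
    (hκ : ∀ k, κ (b k) = Pi.single k 1) (hw : HasSocleComplements H b w) {g : Fin N → ℤ}
    (hg : g ∈ socG H b) {i : Fin d} (hi : κ w i < κ g i) :
    ∃ g' ∈ socG H b, g + g' = w + b i := by
  obtain ⟨k, g', hg', heq⟩ := hw g hg (by rintro rfl; exact hi.false)
  obtain rfl : k = i := by
    by_contra hki
    have hcoord := congrFun (congrArg κ heq) i
    simp only [map_add, hκ, Pi.add_apply, Pi.single_apply, if_neg (Ne.symm hki),
      add_zero] at hcoord
    linarith [coord_nonneg hH hκ hg'.1.1 i]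
  exact ⟨g', hg', heq⟩

theorem coord_le_of_coord_lt (hH : IsSimplicial N d H b) (hκ : ∀ k, κ (b k) = Pi.single k 1)
    (hnorm : IsNormalSg N H) (hw : HasSocleComplements H b w) {h : Fin N → ℤ}
    (hh : h ∈ aperyG H b) {i : Fin d} (hi : κ w i < κ h i) {j : Fin d} (hj : j ≠ i) :
    κ h j ≤ κ w j := by
  obtain ⟨g, hg, hgh⟩ := exists_socG_sub_mem hH hκ hnorm hh
  have hle := (sub_mem_iff_coord_le hH hκ hnorm hg.1.1 hh.1).1 hgh
  obtain ⟨g', hg', heq⟩ := exists_complement_of_coord_lt hH hκ hw hg (hi.trans_le (hle i))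
  have hcoord := congrFun (congrArg κ heq) j
  simp only [map_add, hκ, Pi.add_apply, Pi.single_apply, if_neg hj, add_zero] at hcoord
  linarith [hle j, coord_nonneg hH hκ hg'.1.1 j]

theorem add_ray_sub_mem_aperyG (hH : IsSimplicial N d H b) (hκ : ∀ k, κ (b k) = Pi.single k 1)
    (hnorm : IsNormalSg N H) (hw : HasSocleComplements H b w) (hwa : w ∈ aperyG H b)
    {h : Fin N → ℤ} (hh : h ∈ aperyG H b) {i : Fin d} (hi : κ w i < κ h i) :
    w + b i - h ∈ aperyG H b := by
  have hwb : w + b i ∈ H := add_mem hwa.1 (hH.2.1 i)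
  have hκwb : κ (w + b i) = κ w + Pi.single i 1 := by rw [map_add, hκ]
  have hw1 := (mem_aperyG_iff hH hκ hnorm hwa.1).1 hwa
  have hh1 := (mem_aperyG_iff hH hκ hnorm hh.1).1 hh
  have hmem : w + b i - h ∈ H := by
    refine (sub_mem_iff_coord_le hH hκ hnorm hwb hh.1).2 fun j => ?_
    rw [hκwb, Pi.add_apply, Pi.single_apply]
    split_ifs with hj
    · linarith [hh1 j, coord_nonneg hH hκ hwa.1 j]
    · simpa using coord_le_of_coord_lt hH hκ hnorm hw hh hi hj
  refine (mem_aperyG_iff hH hκ hnorm hmem).2 fun j => ?_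
  rw [map_sub, hκwb, Pi.sub_apply, Pi.add_apply, Pi.single_apply]
  split_ifs with hj
  · subst hj; linarith
  · linarith [hw1 j, coord_nonneg hH hκ hh.1 j]

theorem mem_socG_of_sub_notMem (hH : IsSimplicial N d H b)
    (hκ : ∀ k, κ (b k) = Pi.single k 1) (hnorm : IsNormalSg N H)
    (hw : HasSocleComplements H b w) (hwa : w ∈ aperyG H b) {h : Fin N → ℤ}
    (hh : h ∈ aperyG H b) (hwh : w - h ∉ H) : h ∈ socG H b := by
  obtain ⟨i, hi⟩ : ∃ i, κ w i < κ h i := by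
    simpa [sub_mem_iff_coord_le hH hκ hnorm hwa.1 hh.1, Pi.le_def] using hwh
  have ht := add_ray_sub_mem_aperyG hH hκ hnorm hw hwa hh hi
  obtain ⟨g, hg, hgt⟩ := exists_socG_sub_mem hH hκ hnorm ht
  have hle := (sub_mem_iff_coord_le hH hκ hnorm hg.1.1 ht.1).1 hgt i
  have hh1 := (mem_aperyG_iff hH hκ hnorm hh.1).1 hh i
  obtain ⟨g', hg', heq⟩ := exists_complement_of_coord_lt hH hκ hw hg (by
    simp only [map_sub, map_add, hκ, Pi.sub_apply, Pi.add_apply, Pi.single_eq_same] at hle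
    linarith)
  have hg'h : h - g' = g - (w + b i - h) := by linear_combination -heq
  exact hg'.2 h hh (hg'h ▸ hgt) ▸ hg'

theorem agWitnessG_iff (hH : IsSimplicial N d H b) (hκ : ∀ k, κ (b k) = Pi.single k 1)
    (hnorm : IsNormalSg N H) :
    AGwitnessG H b w ↔ w ∈ socG H b ∧ HasSocleComplements H b w := by
  refine ⟨fun h => ⟨h.1, h.2.2⟩, fun ⟨hws, hw⟩ => ⟨hws, fun h hh => ⟨?_, fun hwh => ?_⟩, hw⟩⟩
  · rintro ⟨hhs, hne⟩ hwh
    exact hne (hhs.2 w hws.1 hwh)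
  · refine ⟨mem_socG_of_sub_notMem hH hκ hnorm hw hws.1 hh hwh, ?_⟩
    rintro rfl
    simp at hwh

theorem setOf_minGenG (hH : IsSimplicial N d H b) (hκ : ∀ k, κ (b k) = Pi.single k 1) :
    {x | minGenG H b x} = (∑ l, b l - ·) '' socG H b := by
  ext x
  constructor
  · rintro ⟨⟨w, hw, h, hh, rfl⟩, hmin⟩
    obtain rfl : h = 0 := by_contra fun h0 => hmin h hh h0 ⟨w, hw, 0, zero_mem _, by ring⟩
    exact ⟨w, hw, by ring⟩
  · rintro ⟨w, hw, rfl⟩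
    refine ⟨⟨w, hw, 0, zero_mem _, by ring⟩, fun h hh h0 ⟨w', hw', h', hh', heq⟩ => h0 ?_⟩
    have hww' : w' - w = h + h' := by linear_combination heq
    obtain rfl := hw.2 w' hw'.1 (hww' ▸ add_mem hh hh')
    exact eq_zero_of_mem_of_add_eq_zero hH hκ hh hh' (by simpa using hww'.symm)

end Witness

def HasIndexComplements {N d s : ℕ} (a : Fin s → Fin N → ℤ) (b : Fin d → Fin N → ℤ)
    (i : Fin s) : Prop :=
  ∀ j : Fin s, j ≠ i → ∃ (j' : Fin s) (l : Fin d), a j + a j' = a i + ∑ l' ∈ univ.erase l, b l'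

theorem hasSocleComplements_iff {N d s : ℕ} {H : AddSubmonoid (Fin N → ℤ)}
    {b : Fin d → Fin N → ℤ} {a : Fin s → Fin N → ℤ}
    (ha : Set.range a = (∑ l, b l - ·) '' socG H b) (hinj : Function.Injective a) {i : Fin s}
    {w : Fin N → ℤ} (hai : a i = ∑ l, b l - w) :
    HasSocleComplements H b w ↔ HasIndexComplements a b i := by
  have hmem : ∀ x, x ∈ Set.range a ↔ ∃ h ∈ socG H b, ∑ l, b l - h = x := fun x => by
    rw [ha]; rfl
  simp_rw [HasIndexComplements, sum_erase_eq_sub (mem_univ _)]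
  constructor
  · intro hw j hj
    obtain ⟨h, hh, haj⟩ := (hmem _).1 ⟨j, rfl⟩
    obtain ⟨l, h', hh', heq⟩ :=
      hw h hh (by rintro rfl; exact hj (hinj (haj.symm.trans hai.symm)))
    obtain ⟨j', haj'⟩ := (hmem _).2 ⟨h', hh', rfl⟩
    exact ⟨j', l, by rw [← haj, haj', hai]; linear_combination -heq⟩
  · intro hw h hh hne
    obtain ⟨j, haj⟩ := (hmem _).2 ⟨h, hh, rfl⟩
    obtain ⟨j', l, heq⟩ :=
      hw j (by rintro rfl; exact hne (sub_right_injective (haj.symm.trans hai)))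
    obtain ⟨h', hh', haj'⟩ := (hmem _).1 ⟨j', rfl⟩
    refine ⟨l, h', hh', ?_⟩
    rw [haj, ← haj', hai] at heq
    linear_combination -heq

theorem sum_univ_erase_fin_two {M : Type*} [AddCommMonoid M] (f : Fin 2 → M) (l : Fin 2) :
    ∑ l' ∈ univ.erase l, f l' = f l.rev := by
  rw [show univ.erase l = {l.rev} by fin_cases l <;> decide, sum_singleton]

theorem normal_AG_criterion_general {N d : ℕ}
    (H : AddSubmonoid (Fin N → ℤ)) (b : Fin d → (Fin N → ℤ))
    (hH : IsSimplicial N d H b) (hnorm : IsNormalSg N H)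
    {s : ℕ} (a : Fin s → (Fin N → ℤ)) (hinj : Function.Injective a)
    (hgen : Set.range a = {x | minGenG H b x}) :
    ((∃ w, AGwitnessG H b w) ↔
      ∃ i : Fin s, ∀ j : Fin s, j ≠ i → ∃ (j' : Fin s) (l : Fin d),
        a j + a j' = a i + ∑ l' ∈ Finset.univ.erase l, b l') ∧
    (∀ i : Fin s,
      (∀ j : Fin s, j ≠ i → ∃ (j' : Fin s) (l : Fin d),
        a j + a j' = a i + ∑ l' ∈ Finset.univ.erase l, b l') →
      ∃ w, AGwitnessG H b w ∧ a i = (∑ l, b l) - w) ∧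
    (d = 2 →
      ((∃ w, AGwitnessG H b w) ↔
        ∃ i : Fin s, ∀ j : Fin s, j ≠ i → ∃ (j' : Fin s) (l : Fin d),
          a j + a j' = a i + b l)) := by
  obtain ⟨κ, hκ⟩ := exists_rayCoord hH.2.2.1
  have ha : Set.range a = (∑ l, b l - ·) '' socG H b := hgen.trans (setOf_minGenG hH hκ)
  have ulrich : ∀ i, HasIndexComplements a b i →
      ∃ w, AGwitnessG H b w ∧ a i = (∑ l, b l) - w := by
    intro i hi
    obtain ⟨w, hw, hai⟩ : a i ∈ (∑ l, b l - ·) '' socG H b := ha ▸ Set.mem_range_self i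
    refine ⟨w, (agWitnessG_iff hH hκ hnorm).2 ⟨hw, ?_⟩, hai.symm⟩
    exact (hasSocleComplements_iff ha hinj hai.symm).2 hi
  have criterion : (∃ w, AGwitnessG H b w) ↔ ∃ i, HasIndexComplements a b i := by
    refine ⟨fun ⟨w, hw⟩ => ?_, fun ⟨i, hi⟩ => (ulrich i hi).imp fun _ => And.left⟩
    obtain ⟨hws, hwc⟩ := (agWitnessG_iff hH hκ hnorm).1 hw
    obtain ⟨i, hai⟩ : ∑ l, b l - w ∈ Set.range a := ha ▸ ⟨w, hws, rfl⟩
    exact ⟨i, (hasSocleComplements_iff ha hinj hai).1 hwc⟩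
  refine ⟨criterion, ulrich, ?_⟩
  rintro rfl
  simp_rw [criterion, HasIndexComplements, sum_univ_erase_fin_two]
  exact exists_congr fun i => forall₂_congr fun j _ => exists_congr fun j' =>
    (Fin.rev_surjective.exists (p := fun l => a j + a j' = a i + b l)).symm

/-- For a normal Cohen–Macaulay simplicial semigroup `(H,E)` whose
canonical ideal `ω_H` has minimal generators `a₁, …, a_s`: `H` is an AG semigroup iff
there is `i` such that for every `j ≠ i` there exist `j'` and `b ∈ E` with
`a_j + a_{j'} = a_i + Σ_{h ∈ E\{b}} h`; in that case `a_i` is an Ulrich element, i.e.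
`a_i = Σ_{b ∈ E} b - w` for an AG witness `w`.  When the rank is `2` the condition reads
`a_j + a_{j'} = a_i + b` for some `b ∈ E`. -/
theorem normal_AG_criterion {N d : ℕ}
    (H : AddSubmonoid (Fin N → ℤ)) (b : Fin d → (Fin N → ℤ))
    (hH : IsSimplicial N d H b) (hnorm : IsNormalSg N H) (hCM : CMG H b)
    {s : ℕ} (hs : 1 ≤ s) (a : Fin s → (Fin N → ℤ)) (hinj : Function.Injective a)
    (hgen : Set.range a = {x | minGenG H b x}) :
    ((∃ w, AGwitnessG H b w) ↔
      ∃ i : Fin s, ∀ j : Fin s, j ≠ i → ∃ (j' : Fin s) (l : Fin d),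
        a j + a j' = a i + ∑ l' ∈ Finset.univ.erase l, b l') ∧
    (∀ i : Fin s,
      (∀ j : Fin s, j ≠ i → ∃ (j' : Fin s) (l : Fin d),
        a j + a j' = a i + ∑ l' ∈ Finset.univ.erase l, b l') →
      ∃ w, AGwitnessG H b w ∧ a i = (∑ l, b l) - w) ∧
    (d = 2 →
      ((∃ w, AGwitnessG H b w) ↔
        ∃ i : Fin s, ∀ j : Fin s, j ≠ i → ∃ (j' : Fin s) (l : Fin d),
          a j + a j' = a i + b l)) :=
  normal_AG_criterion_general H b hH hnorm a hinj hgen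

end AGpaper
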